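/- Let R_n = F_2[a_1,...,a_n]/(a_i³, a_i² + a_j², a_i a_k for i ≠ k) with all a_i of degree 1 (n ≥ 1). Then the group of units R_n^× is isomorphic to Z/4 × (Z/2)^{n-1}; in particular it has order 2^{n+1}, exactly 2^n - 1 elements of order 2, and exactly 2^n elements of order 4. -/

import Mathlib

open MvPolynomial

/-- The relations defining `H^*(P_n; F_2)` with degree-one generators `a_i = X i`:
`a_i³`, `a_i² + a_j²`, and `a_i a_k` for `i ≠ k`. -/
def projRelations (n : ℕ) : Set (MvPolynomial (Fin n) (ZMod 2)) :=
  {p | ∃ i, p = X i ^ 3} ∪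
  {p | ∃ i j, p = X i ^ 2 + X j ^ 2} ∪
  {p | ∃ i k, i ≠ k ∧ p = X i * X k}

/-- The (ungraded) mod 2 cohomology ring of the connected sum `P_n` of `n` copies of `RP²`. -/
def ProjSumCohomology (n : ℕ) : Type :=
  MvPolynomial (Fin n) (ZMod 2) ⧸ Ideal.span (projRelations n)

noncomputable instance (n : ℕ) : CommRing (ProjSumCohomology n) :=
  Ideal.Quotient.commRing _

/-!
Reducing modulo the relations, every class of `R_n` is uniquely `c + ∑ vᵢ aᵢ + d y` with
`y = aᵢ²`, so `R_n` is the ring of triples `(c, v, d)` in which degree-one classes multiply by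
the dot product. Its units are the triples with `c = 1`, multiplying as
`(v, d) (w, e) = (v + w, d + e + v ⬝ᵥ w)`. Lifting to `ZMod 4`, the weight `∑ vᵢ + 2 d` becomes
additive, because `|v + w| = |v| + |w| - 2 (v ⬝ᵥ w)`; together with the coordinates
`v₂, …, vₙ` it is an injective homomorphism onto `ℤ/4 × (ℤ/2)ⁿ⁻¹`, bijective by counting.
In that group `x² = 1` exactly when the `ℤ/4`-coordinate is even, which gives the counts of
elements of order `2` and `4`.
-/

section OrderCount

variable {G : Type*} [Group G]

lemma card_orderOf_congr {H : Type*} [Group H] (e : G ≃* H) (k : ℕ) :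
    Nat.card {x : G // orderOf x = k} = Nat.card {y : H // orderOf y = k} :=
  Nat.card_congr (e.toEquiv.subtypeEquiv fun x => by simp)

lemma card_orderOf_eq_two :
    Nat.card {x : G // orderOf x = 2} = Nat.card {x : G // x ^ 2 = 1} - 1 := by
  have h : {x : G | orderOf x = 2} = {x | x ^ 2 = 1} \ {1} := by
    ext x; simp [orderOf_eq_prime_iff]
  change Set.ncard {x : G | orderOf x = 2} = Set.ncard {x : G | x ^ 2 = 1} - 1
  rw [h, Set.ncard_sdiff_singleton_of_mem (show (1 : G) ∈ {x : G | x ^ 2 = 1} from one_pow 2)]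

lemma card_orderOf_eq_four_of_pow_four_eq_one [Finite G] (hG : ∀ x : G, x ^ 4 = 1) :
    Nat.card {x : G // orderOf x = 4} = Nat.card G - Nat.card {x : G // x ^ 2 = 1} := by
  have h : {x : G | orderOf x = 4} = {x | x ^ 2 = 1}ᶜ := by
    ext x
    change orderOf x = 4 ↔ ¬x ^ 2 = 1
    exact ⟨fun hx => pow_ne_one_of_lt_orderOf two_ne_zero (by omega),
      fun hx => orderOf_eq_prime_pow (p := 2) (n := 1) hx (hG x)⟩
  change Set.ncard {x : G | orderOf x = 4} = _ - Set.ncard {x : G | x ^ 2 = 1}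
  rw [h, Set.ncard_compl]

end OrderCount

namespace ProjSumCohomology

section ZMod4

def double : ZMod 2 →+ ZMod 4 where
  toFun x := 2 * x.val
  map_zero' := rfl
  map_add' := by decide

lemma val_add_add_double_mul : ∀ x y : ZMod 2,
    ((x + y).val : ZMod 4) + double (x * y) = x.val + y.val := by
  decide

lemma eq_zero_of_val_add_double_eq_zero :
    ∀ a b : ZMod 2, (a.val : ZMod 4) + double b = 0 → a = 0 ∧ b = 0 := by
  decide

variable {κ : Type*}

lemma sq_eq_one_iff_two_nsmul_fst (x : Multiplicative (ZMod 4 × (κ → ZMod 2))) :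
    x ^ 2 = 1 ↔ 2 • x.toAdd.1 = 0 := by
  have h2 : 2 • x.toAdd.2 = 0 := funext fun i => CharTwo.two_nsmul _
  rw [← toAdd_eq_zero, toAdd_pow, Prod.ext_iff, Prod.smul_snd, h2, Prod.smul_fst]
  exact and_iff_left rfl

lemma pow_four_eq_one (x : Multiplicative (ZMod 4 × (κ → ZMod 2))) : x ^ 4 = 1 := by
  rw [← toAdd_eq_zero, toAdd_pow]
  refine Prod.ext (ZModModule.char_nsmul_eq_zero 4 _) (funext fun i => ?_)
  change (2 * 2) • x.toAdd.2 i = 0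
  rw [mul_nsmul, CharTwo.two_nsmul]

variable [Fintype κ]

lemma card_multiplicative :
    Nat.card (Multiplicative (ZMod 4 × (κ → ZMod 2))) = 2 ^ (Fintype.card κ + 2) := by
  rw [Nat.card_congr Multiplicative.toAdd, Nat.card_prod, Nat.card_fun, Nat.card_zmod,
    Nat.card_zmod, Nat.card_eq_fintype_card]
  ring

lemma card_sq_eq_one :
    Nat.card {x : Multiplicative (ZMod 4 × (κ → ZMod 2)) // x ^ 2 = 1} =
      2 ^ (Fintype.card κ + 1) := by
  have h2 : Nat.card {a : ZMod 4 // 2 • a = 0} = 2 := by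
    rw [Nat.card_eq_fintype_card]; decide
  rw [Nat.card_congr ((Multiplicative.toAdd.subtypeEquiv (q := fun a => 2 • a.1 = 0)
      sq_eq_one_iff_two_nsmul_fst).trans
      (Equiv.prodSubtypeFstEquivSubtypeProd (p := fun a => 2 • a = 0))),
    Nat.card_prod, Nat.card_fun, h2, Nat.card_zmod, Nat.card_eq_fintype_card, pow_succ, mul_comm]

end ZMod4

/-- `⟨c, v, d⟩` stands for `c + ∑ i, v i • a i + d • y`. As `a i * a k = if i = k then y else 0`,
degree-one parts multiply by the dot product. -/
@[ext] structure Model (ι : Type*) where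
  c : ZMod 2
  v : ι → ZMod 2
  d : ZMod 2

namespace Model

variable {ι : Type*}

instance : Zero (Model ι) := ⟨⟨0, 0, 0⟩⟩
instance : One (Model ι) := ⟨⟨1, 0, 0⟩⟩
instance : Add (Model ι) := ⟨fun x y => ⟨x.c + y.c, x.v + y.v, x.d + y.d⟩⟩
instance : Neg (Model ι) := ⟨fun x => ⟨-x.c, -x.v, -x.d⟩⟩

@[simp] lemma zero_c : (0 : Model ι).c = 0 := rfl
@[simp] lemma zero_v : (0 : Model ι).v = 0 := rfl
@[simp] lemma zero_d : (0 : Model ι).d = 0 := rfl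
@[simp] lemma one_c : (1 : Model ι).c = 1 := rfl
@[simp] lemma one_v : (1 : Model ι).v = 0 := rfl
@[simp] lemma one_d : (1 : Model ι).d = 0 := rfl
@[simp] lemma add_c (x y : Model ι) : (x + y).c = x.c + y.c := rfl
@[simp] lemma add_v (x y : Model ι) : (x + y).v = x.v + y.v := rfl
@[simp] lemma add_d (x y : Model ι) : (x + y).d = x.d + y.d := rfl
@[simp] lemma neg_c (x : Model ι) : (-x).c = -x.c := rfl
@[simp] lemma neg_v (x : Model ι) : (-x).v = -x.v := rfl
@[simp] lemma neg_d (x : Model ι) : (-x).d = -x.d := rfl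

variable [Fintype ι]

instance : Mul (Model ι) :=
  ⟨fun x y => ⟨x.c * y.c, x.c • y.v + y.c • x.v, x.c * y.d + y.c * x.d + x.v ⬝ᵥ y.v⟩⟩

@[simp] lemma mul_c (x y : Model ι) : (x * y).c = x.c * y.c := rfl
@[simp] lemma mul_v (x y : Model ι) : (x * y).v = x.c • y.v + y.c • x.v := rfl
@[simp] lemma mul_d (x y : Model ι) : (x * y).d = x.c * y.d + y.c * x.d + x.v ⬝ᵥ y.v := rfl

instance : CommRing (Model ι) where
  add_assoc x y z := by ext <;> simp [add_assoc]
  zero_add x := by ext <;> simp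
  add_zero x := by ext <;> simp
  add_comm x y := by ext <;> simp [add_comm]
  neg_add_cancel x := by ext <;> exact neg_add_cancel _
  mul_assoc x y z := by
    ext <;> simp [mul_assoc, smul_add, smul_smul, dotProduct_add, dotProduct_smul,
      dotProduct_comm] <;> ring
  one_mul x := by ext <;> simp
  mul_one x := by ext <;> simp
  left_distrib x y z := by ext <;> simp [mul_add, smul_add, dotProduct_add] <;> ring
  right_distrib x y z := by ext <;> simp [add_mul, add_smul, add_dotProduct] <;> ring
  zero_mul x := by ext <;> simp
  mul_zero x := by ext <;> simp
  mul_comm x y := by ext <;> simp [mul_comm, add_comm, dotProduct_comm]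
  nsmul := nsmulRec
  zsmul := zsmulRec

def const : ZMod 2 →+* Model ι where
  toFun a := ⟨a, 0, 0⟩
  map_one' := rfl
  map_mul' a b := by ext <;> simp
  map_zero' := rfl
  map_add' a b := by ext <;> simp

def linear : (ι → ZMod 2) →+ Model ι where
  toFun v := ⟨0, v, 0⟩
  map_zero' := rfl
  map_add' v w := by ext <;> simp

def augmentation : Model ι →+* ZMod 2 where
  toFun := Model.c
  map_one' := rfl
  map_mul' _ _ := rfl
  map_zero' := rfl
  map_add' _ _ := rfl

lemma unit_c (u : (Model ι)ˣ) : (u : Model ι).c = 1 :=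
  congrArg Units.val (Subsingleton.elim (Units.map (augmentation (ι := ι)).toMonoidHom u) 1)

lemma mul_v_of_c_eq_one {x y : Model ι} (hx : x.c = 1) (hy : y.c = 1) :
    (x * y).v = x.v + y.v := by
  rw [mul_v, hx, hy, one_smul, one_smul, add_comm]

lemma mul_d_of_c_eq_one {x y : Model ι} (hx : x.c = 1) (hy : y.c = 1) :
    (x * y).d = x.d + y.d + x.v ⬝ᵥ y.v := by
  rw [mul_d, hx, hy, one_mul, one_mul, add_comm y.d]

lemma mk_one_mul_mk_one_add_dotProduct_self (v : ι → ZMod 2) (d : ZMod 2) :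
    (⟨1, v, d⟩ : Model ι) * ⟨1, v, d + v ⬝ᵥ v⟩ = 1 := by
  ext <;> simp <;> grind

def unitsEquiv : (Model ι)ˣ ≃ (ι → ZMod 2) × ZMod 2 where
  toFun u := ((u : Model ι).v, (u : Model ι).d)
  invFun p :=
    { val := ⟨1, p.1, p.2⟩
      inv := ⟨1, p.1, p.2 + p.1 ⬝ᵥ p.1⟩
      val_inv := mk_one_mul_mk_one_add_dotProduct_self p.1 p.2
      inv_val := by rw [mul_comm]; exact mk_one_mul_mk_one_add_dotProduct_self p.1 p.2 }
  left_inv u := Units.ext <| Model.ext (unit_c u).symm rfl rfl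
  right_inv _ := rfl

lemma card_units : Nat.card (Model ι)ˣ = 2 ^ (Fintype.card ι + 1) := by
  simp [Nat.card_congr unitsEquiv, Nat.card_fun, pow_succ]

def weightMod4 (x : Model ι) : ZMod 4 := ∑ i, ((x.v i).val : ZMod 4) + double x.d

lemma weightMod4_mul {x y : Model ι} (hx : x.c = 1) (hy : y.c = 1) :
    weightMod4 (x * y) = weightMod4 x + weightMod4 y := by
  have hv : ∑ i, (((x.v + y.v) i).val : ZMod 4) + ∑ i, double (x.v i * y.v i) =
      ∑ i, ((x.v i).val : ZMod 4) + ∑ i, ((y.v i).val : ZMod 4) := by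
    simp only [← Finset.sum_add_distrib, Pi.add_apply, val_add_add_double_mul]
  rw [weightMod4, mul_v_of_c_eq_one hx hy, mul_d_of_c_eq_one hx hy, map_add, map_add, dotProduct,
    map_sum, weightMod4, weightMod4]
  linear_combination hv

section Units

variable {m : ℕ}

def unitsHom : (Model (Fin (m + 1)))ˣ →* Multiplicative (ZMod 4 × (Fin m → ZMod 2)) :=
  MonoidHom.mk'
    (fun u => .ofAdd (weightMod4 (u : Model (Fin (m + 1))), Fin.tail (u : Model (Fin (m + 1))).v))
    fun u w => by
      rw [← ofAdd_add, Prod.mk_add_mk, Units.val_mul, weightMod4_mul (unit_c u) (unit_c w),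
        mul_v_of_c_eq_one (unit_c u) (unit_c w)]
      rfl

lemma unitsHom_injective : Function.Injective (unitsHom (m := m)) := by
  refine (injective_iff_map_eq_one _).2 fun u hu => ?_
  obtain ⟨hw, htail⟩ : weightMod4 (u : Model (Fin (m + 1))) = 0 ∧
      Fin.tail (u : Model (Fin (m + 1))).v = 0 :=
    Prod.mk_eq_zero.1 (ofAdd_eq_one.1 hu)
  have hsucc (j : Fin m) : (u : Model (Fin (m + 1))).v j.succ = 0 := congrFun htail j
  rw [weightMod4, Fin.sum_univ_succ] at hw
  simp only [hsucc, ZMod.val_zero, Nat.cast_zero, Finset.sum_const_zero, add_zero] at hw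
  obtain ⟨hv0, hd⟩ := eq_zero_of_val_add_double_eq_zero _ _ hw
  refine Units.ext (Model.ext (unit_c u) (funext fun i => ?_) hd)
  cases i using Fin.cases with
  | zero => exact hv0
  | succ j => exact hsucc j

noncomputable def unitsMulEquiv :
    (Model (Fin (m + 1)))ˣ ≃* Multiplicative (ZMod 4 × (Fin m → ZMod 2)) :=
  MulEquiv.ofBijective unitsHom <| (Nat.bijective_iff_injective_and_card _).2 ⟨unitsHom_injective,
    by rw [card_units, card_multiplicative, Fintype.card_fin, Fintype.card_fin]⟩

end Units

variable [DecidableEq ι]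

def gen (i : ι) : Model ι := linear (Pi.single i 1)

lemma mul_gen (x : Model ι) (i : ι) : x * gen i = ⟨0, Pi.single i x.c, x.v i⟩ := by
  ext <;> simp [gen, linear, dotProduct_single, Pi.single_apply]

lemma const_mul_gen (a : ZMod 2) (i : ι) : const a * gen i = linear (Pi.single i a) := by
  rw [mul_gen]; rfl

lemma gen_sq (i : ι) : gen i ^ 2 = ⟨0, 0, 1⟩ := by
  rw [sq, mul_gen]; ext <;> simp [gen, linear]

noncomputable def ofPoly : MvPolynomial ι (ZMod 2) →+* Model ι := eval₂Hom const gen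

@[simp] lemma ofPoly_X (i : ι) : ofPoly (X i) = gen i := eval₂Hom_X' _ _ _

@[simp] lemma ofPoly_C (a : ZMod 2) : ofPoly (C a : MvPolynomial ι (ZMod 2)) = const a :=
  eval₂Hom_C _ _ _

end Model

section Quotient

open Model

variable {n : ℕ}

lemma projRelations_subset_ker_ofPoly :
    projRelations n ⊆ RingHom.ker (ofPoly : _ →+* Model (Fin n)) := by
  rintro p ((⟨i, rfl⟩ | ⟨i, j, rfl⟩) | ⟨i, k, hik, rfl⟩) <;>
    simp only [SetLike.mem_coe, RingHom.mem_ker, map_add, map_mul, map_pow, ofPoly_X]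
  · rw [pow_succ, gen_sq, mul_gen]; ext <;> simp
  · rw [gen_sq, gen_sq]; ext <;> simp [CharTwo.add_self_eq_zero]
  · rw [mul_gen]; ext <;> simp [gen, linear, Pi.single_apply, hik.symm]

noncomputable def toModel : ProjSumCohomology n →+* Model (Fin n) :=
  Ideal.Quotient.lift _ ofPoly fun _ hp => Ideal.span_le.2 projRelations_subset_ker_ofPoly hp

variable (n) in
noncomputable def mk : MvPolynomial (Fin n) (ZMod 2) →+* ProjSumCohomology n :=
  Ideal.Quotient.mk _

lemma mk_surjective : Function.Surjective (mk n) := Ideal.Quotient.mk_surjective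

@[simp] lemma toModel_mk (p : MvPolynomial (Fin n) (ZMod 2)) : toModel (mk n p) = ofPoly p := rfl

lemma mk_eq_zero {p : MvPolynomial (Fin n) (ZMod 2)} (hp : p ∈ projRelations n) : mk n p = 0 :=
  Ideal.Quotient.eq_zero_iff_mem.2 (Ideal.subset_span hp)

lemma mk_X_mul_X {i k : Fin n} (h : i ≠ k) : mk n (X i * X k) = 0 :=
  mk_eq_zero (Or.inr ⟨i, k, h, rfl⟩)

lemma mk_X_sq (i j : Fin n) : mk n (X i ^ 2) = mk n (X j ^ 2) := by
  refine Ideal.Quotient.eq.2 ?_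
  rw [CharTwo.sub_eq_add]
  exact Ideal.subset_span (Or.inl (Or.inr ⟨i, j, rfl⟩))

lemma mk_X_sq_mul_X (i j : Fin n) : mk n (X i ^ 2 * X j) = 0 := by
  rw [map_mul, mk_X_sq i j, ← map_mul, ← pow_succ]
  exact mk_eq_zero (Or.inl (Or.inl ⟨j, rfl⟩))

variable [NeZero n]

noncomputable def ofModel (x : Model (Fin n)) : ProjSumCohomology n :=
  mk n (C x.c + ∑ i, C (x.v i) * X i + C x.d * X 0 ^ 2)

lemma ofModel_add (x y : Model (Fin n)) : ofModel (x + y) = ofModel x + ofModel y := by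
  simp only [ofModel, ← map_add]
  congr 1
  simp only [add_c, add_v, add_d, Pi.add_apply, map_add, add_mul, Finset.sum_add_distrib]
  ring

lemma ofModel_mul_gen (x : Model (Fin n)) (i : Fin n) :
    ofModel (x * gen i) = ofModel x * mk n (X i) := by
  have hL : ∑ j, C ((Pi.single i x.c : Fin n → ZMod 2) j) * X j =
      (C x.c * X i : MvPolynomial (Fin n) (ZMod 2)) :=
    (Fintype.sum_eq_single i fun j hj => by simp [hj]).trans (by simp)
  have hR : ∑ j, mk n (C (x.v j) * X j * X i) = mk n (C (x.v i) * X 0 ^ 2) := by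
    refine (Fintype.sum_eq_single i fun j hj => ?_).trans ?_
    · rw [mul_assoc, map_mul, mk_X_mul_X hj, mul_zero]
    · rw [mul_assoc, ← sq, map_mul, map_mul, mk_X_sq i 0]
  have hz : mk n (C x.d * X 0 ^ 2 * X i) = 0 := by
    rw [mul_assoc, map_mul, mk_X_sq_mul_X, mul_zero]
  rw [mul_gen, ofModel, ofModel, hL, C_0, zero_add, ← map_mul, add_mul, add_mul, Finset.sum_mul,
    map_add, map_add, map_add, map_sum, hR, hz, add_zero]

lemma ofModel_toModel (q : ProjSumCohomology n) : ofModel (toModel q) = q := by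
  obtain ⟨p, rfl⟩ := mk_surjective q
  induction p using MvPolynomial.induction_on with
  | C a => simp [ofModel, const]
  | add p q hp hq => rw [map_add, map_add, ofModel_add, hp, hq]
  | mul_X p i hp =>
    rw [map_mul, map_mul, toModel_mk, toModel_mk, ofPoly_X, ofModel_mul_gen, ← toModel_mk, hp]

lemma toModel_ofModel (x : Model (Fin n)) : toModel (ofModel x) = x := by
  have hv : ∑ i, linear (Pi.single i (x.v i)) = linear x.v := by
    rw [← map_sum, Finset.univ_sum_single]
  simp only [ofModel, toModel_mk, map_add, map_sum, map_mul, map_pow, ofPoly_C, ofPoly_X,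
    const_mul_gen, hv, gen_sq]
  ext <;> simp [const, linear]

noncomputable def ringEquivModel : ProjSumCohomology n ≃+* Model (Fin n) :=
  RingEquiv.ofBijective toModel
    ⟨Function.LeftInverse.injective ofModel_toModel,
      Function.RightInverse.surjective toModel_ofModel⟩

end Quotient

end ProjSumCohomology

open ProjSumCohomology Model

theorem projSum_units (n : ℕ) (hn : 1 ≤ n) :
    Nonempty ((ProjSumCohomology n)ˣ ≃*
      Multiplicative (ZMod 4 × (Fin (n - 1) → ZMod 2))) ∧
    Nat.card (ProjSumCohomology n)ˣ = 2 ^ (n + 1) ∧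
    Nat.card {u : (ProjSumCohomology n)ˣ // orderOf u = 2} = 2 ^ n - 1 ∧
    Nat.card {u : (ProjSumCohomology n)ˣ // orderOf u = 4} = 2 ^ n := by
  obtain ⟨m, rfl⟩ : ∃ m, n = m + 1 := ⟨n - 1, by omega⟩
  let e : (ProjSumCohomology (m + 1))ˣ ≃* Multiplicative (ZMod 4 × (Fin m → ZMod 2)) :=
    (Units.mapEquiv ringEquivModel.toMulEquiv).trans unitsMulEquiv
  have hcard : Nat.card (ProjSumCohomology (m + 1))ˣ = 2 ^ (m + 2) := by
    rw [Nat.card_congr e.toEquiv, card_multiplicative, Fintype.card_fin]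
  have hsq : Nat.card {x : Multiplicative (ZMod 4 × (Fin m → ZMod 2)) // x ^ 2 = 1} =
      2 ^ (m + 1) := by
    rw [card_sq_eq_one, Fintype.card_fin]
  refine ⟨⟨e⟩, hcard, ?_, ?_⟩
  · rw [card_orderOf_congr e, card_orderOf_eq_two, hsq]
  · rw [card_orderOf_congr e, card_orderOf_eq_four_of_pow_four_eq_one pow_four_eq_one, hsq,
      ← Nat.card_congr e.toEquiv, hcard, pow_succ 2 (m + 1)]
    omega
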